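/- Let H ≤ GL(V) be the stabilizer of the flag V > U_1 > ... > U_{k-1} > 0, let 0 < W < V with W ⊆ U_{k-1}, and let W' be a direct complement of W in V. Then U_{k-1} = W if and only if H ∩ {X ∈ GL(V) : (X - I)V ⊆ W' and (X - I)W' = 0} = {I}. -/
import Mathlib

private lemma mulVec_toMatrix'_aux {F : Type} [Field F] {n : ℕ}
    (f : (Fin n → F) →ₗ[F] (Fin n → F)) (v : Fin n → F) :
    (LinearMap.toMatrix' f).mulVec v = f v := by
  have := Matrix.toLin'_toMatrix' f
  calc (LinearMap.toMatrix' f).mulVec v = Matrix.toLin' (LinearMap.toMatrix' f) v := by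
        rw [Matrix.toLin'_apply]
    _ = f v := by rw [this]

/-- Let `H ≤ GL(V)` be the stabilizer of the flag
`V = U_0 > U_1 > ... > U_{k-1} > U_k = 0`, let `0 < W < V` with `W ⊆ U_{k-1}`, and let
`W'` be a direct complement of `W` in `V`. Then `U_{k-1} = W` iff the only element of
`H` with `(X - I)V ⊆ W'` and `(X - I)W' = 0` is the identity. -/
theorem stmt_9 (F : Type) [Field F] [Fintype F] (n k : ℕ) (hk : 0 < k)
    (U : Fin (k + 1) → Submodule F (Fin n → F))
    (hanti : StrictAnti U) (h0 : U 0 = ⊤) (hlast : U (Fin.last k) = ⊥)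
    (W W' : Submodule F (Fin n → F)) (hW0 : W ≠ ⊥) (hWV : W ≠ ⊤)
    (hWT : W ≤ U ⟨k - 1, by omega⟩) (hcompl : IsCompl W W') :
    U ⟨k - 1, by omega⟩ = W ↔
      ∀ X : GL (Fin n) F,
        (∀ i, (U i).map (Matrix.mulVecLin (X : Matrix (Fin n) (Fin n) F)) = U i) →
        (∀ v : Fin n → F, (X : Matrix (Fin n) (Fin n) F).mulVec v - v ∈ W') →
        (∀ w ∈ W', (X : Matrix (Fin n) (Fin n) F).mulVec w = w) →
        X = 1 := by
  constructor
  · intro hU X hmap h2 h3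
    set M : Matrix (Fin n) (Fin n) F := (X : Matrix (Fin n) (Fin n) F) with hM
    have hid : ∀ v, M.mulVec v = v := by
      intro v
      have hv : v ∈ W ⊔ W' := by rw [hcompl.sup_eq_top]; trivial
      obtain ⟨w, hw, w'', hw'', rfl⟩ := Submodule.mem_sup.mp hv
      have hMw : M.mulVec w ∈ W := by
        have := hmap ⟨k - 1, by omega⟩
        rw [hU] at this
        rw [← this]
        exact ⟨w, hw, rfl⟩
      have hsub : M.mulVec w - w = 0 := by
        have h1 : M.mulVec w - w ∈ W := sub_mem hMw hw
        have h2' : M.mulVec w - w ∈ W' := h2 w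
        exact (Submodule.disjoint_def.mp hcompl.disjoint) _ h1 h2'
      have hw' : M.mulVec w'' = w'' := h3 w'' hw''
      rw [Matrix.mulVec_add, sub_eq_zero.mp hsub, hw']
    apply Units.ext
    show M = 1
    have hlin : Matrix.toLin' M = LinearMap.id := by
      refine LinearMap.ext fun v => ?_
      rw [Matrix.toLin'_apply, hid v, LinearMap.id_apply]
    calc M = LinearMap.toMatrix' (Matrix.toLin' M) := (LinearMap.toMatrix'_toLin' M).symm
      _ = LinearMap.toMatrix' (LinearMap.id) := by rw [hlin]
      _ = 1 := LinearMap.toMatrix'_id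
  · intro h
    by_contra hne
    have hlt : W < U ⟨k - 1, by omega⟩ := lt_of_le_of_ne hWT (fun h' => hne h'.symm)
    obtain ⟨u, hu, hunW⟩ := SetLike.exists_of_lt hlt
    have hu_sup : u ∈ W ⊔ W' := by rw [hcompl.sup_eq_top]; trivial
    obtain ⟨w, hw, y, hy, hsum⟩ := Submodule.mem_sup.mp hu_sup
    -- y ∈ W' ∩ U_{k-1}, y ≠ 0
    have hyU : y ∈ U ⟨k - 1, by omega⟩ := by
      have : y = u - w := by rw [← hsum]; abel
      rw [this]; exact sub_mem hu (hWT hw)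
    have hy0 : y ≠ 0 := by
      intro h0'
      apply hunW
      rw [← hsum, h0', add_zero]; exact hw
    -- a nonzero element of W, not in W'
    obtain ⟨w₀, hw₀W, hw₀0⟩ := Submodule.exists_mem_ne_zero_of_ne_bot hW0
    have hw₀nW' : w₀ ∉ W' := by
      intro hmem
      exact hw₀0 ((Submodule.disjoint_def.mp hcompl.disjoint) _ hw₀W hmem)
    obtain ⟨φ, hφw₀, hφW'⟩ := Submodule.exists_dual_map_eq_bot_of_notMem hw₀nW' inferInstance
    have hφy : φ y = 0 := by
      have : φ y ∈ W'.map φ := ⟨y, hy, rfl⟩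
      rwa [hφW', Submodule.mem_bot] at this
    set f : (Fin n → F) →ₗ[F] (Fin n → F) := φ.smulRight y with hf
    have hfapp : ∀ v, f v = φ v • y := fun v => rfl
    have hff : f.comp f = 0 := by
      ext v
      simp [hfapp, hφy]
    set A : Matrix (Fin n) (Fin n) F := LinearMap.toMatrix' f with hA
    have hAv : ∀ v, A.mulVec v = φ v • y := fun v => mulVec_toMatrix'_aux f v
    have hAA : A * A = 0 := by
      rw [hA, ← LinearMap.toMatrix'_comp, hff, map_zero]
    have hMN : (1 + A) * (1 - A) = 1 := by
      have expand : (1 + A) * (1 - A) = 1 - A * A := by noncomm_ring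
      rw [expand, hAA, sub_zero]
    have hNM : (1 - A) * (1 + A) = 1 := by
      have expand : (1 - A) * (1 + A) = 1 - A * A := by noncomm_ring
      rw [expand, hAA, sub_zero]
    set X : GL (Fin n) F := ⟨1 + A, 1 - A, hMN, hNM⟩ with hX
    have hXv : ∀ v, ((X : Matrix (Fin n) (Fin n) F)).mulVec v = v + φ v • y := by
      intro v
      show (1 + A).mulVec v = v + φ v • y
      rw [Matrix.add_mulVec, Matrix.one_mulVec, hAv]
    -- the three hypotheses
    have hmap : ∀ i, (U i).map
        (Matrix.mulVecLin (X : Matrix (Fin n) (Fin n) F)) = U i := by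
      intro i
      have hyUi : i ≠ Fin.last k → y ∈ U i := by
        intro hi
        have hle : i ≤ ⟨k - 1, by omega⟩ := by
          rcases lt_or_eq_of_le (Fin.le_last i) with h' | h'
          · exact Fin.mk_le_mk.mpr (by
              have : (i : ℕ) < k := by
                have := Fin.lt_iff_val_lt_val.mp h'
                simpa using this
              omega)
          · exact absurd h' hi
        exact hanti.antitone hle hyU
      apply le_antisymm
      · rintro _ ⟨v, hv, rfl⟩
        rw [Matrix.mulVecLin_apply, hXv]
        rcases eq_or_ne i (Fin.last k) with rfl | hi
        · rw [hlast] at hv ⊢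
          simp only [SetLike.mem_coe, Submodule.mem_bot] at hv
          subst hv
          simp
        · exact add_mem hv (Submodule.smul_mem _ _ (hyUi hi))
      · intro v hv
        rcases eq_or_ne i (Fin.last k) with rfl | hi
        · rw [hlast] at hv ⊢
          simp only [SetLike.mem_coe, Submodule.mem_bot] at hv
          subst hv
          exact Submodule.zero_mem _
        · refine ⟨v - φ v • y, sub_mem hv (Submodule.smul_mem _ _ (hyUi hi)), ?_⟩
          rw [Matrix.mulVecLin_apply, hXv]
          simp [hφy, map_sub, map_smul, smul_smul, sub_smul, mul_comm]
    have h2 : ∀ v : Fin n → F,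
        (X : Matrix (Fin n) (Fin n) F).mulVec v - v ∈ W' := by
      intro v
      rw [hXv]
      simpa using Submodule.smul_mem _ (φ v) hy
    have h3 : ∀ w ∈ W', (X : Matrix (Fin n) (Fin n) F).mulVec w = w := by
      intro w hwmem
      have : φ w = 0 := by
        have : φ w ∈ W'.map φ := ⟨w, hwmem, rfl⟩
        rwa [hφW', Submodule.mem_bot] at this
      rw [hXv, this, zero_smul, add_zero]
    have hX1 : X = 1 := h X hmap h2 h3
    -- contradiction: X w₀ = w₀ + φ w₀ • y ≠ w₀
    have : (X : Matrix (Fin n) (Fin n) F).mulVec w₀ = w₀ := by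
      rw [hX1]
      simp
    rw [hXv] at this
    have hzero : φ w₀ • y = 0 := by
      have := congrArg (fun z => z - w₀) this
      simpa using this
    rcases smul_eq_zero.mp hzero with h' | h'
    · exact hφw₀ h'
    · exact hy0 h'
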